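/- arXiv:1106.2256 — 3 statements merged into one kernel-verified Lean document; each statement's English description precedes it below -/
import Mathlib

section
/- Let g be the standard Gaussian density on ℝ and let ρ = gF be a probability density with F : ℝ → [0,∞) log-concave. Then the rescaled self-convolution ρ⊛ρ again has the form ρ⊛ρ = gF₂ where F₂(x) = ∫ g(y) F((x+y)/√2) F((x−y)/√2) dy is log-concave. In other words, if ρ/g is log-concave then (ρ⊛ρ)/g is log-concave. -/
/-!
The identity `g(√2 x - y) g(y) = g(x) g(√2 y - x)` and the substitution `y ↦ √2 y - x` turn
`ρ ⊛ ρ` into `g F₂`. The integrand `(x, y) ↦ g(y) F((x+y)/√2) F((x-y)/√2)` is jointly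
log-concave, so its marginal `F₂` is log-concave by the Prékopa–Leindler inequality. On the
line, Prékopa–Leindler follows from the layer-cake formula and the Brunn–Minkowski inequality
`|A| + |B| ≤ |A + B|` applied to superlevel sets. All integrals are finite because a log-concave
function grows at most exponentially, which the Gaussian factor absorbs.
-/

open MeasureTheory Real Set

noncomputable section

/-- The standard Gaussian density on ℝ. -/
def gaussPDF (x : ℝ) : ℝ := (Real.sqrt (2 * Real.pi))⁻¹ * Real.exp (-x ^ 2 / 2)

/-- Convolution of two densities on ℝ. -/
def convDens (f g : ℝ → ℝ) (x : ℝ) : ℝ := ∫ y, f (x - y) * g y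

/-- `iterConv ρ n` is the `(n+1)`-fold convolution of `ρ` with itself. -/
def iterConv (ρ : ℝ → ℝ) : ℕ → ℝ → ℝ
  | 0 => ρ
  | n + 1 => convDens (iterConv ρ n) ρ

/-- `rescaledConv ρ n` is the density of `n^{-1/2}(X₁ + ⋯ + Xₙ)` for i.i.d. `Xⱼ`
with density `ρ`, i.e. `x ↦ √n (ρ∗⋯∗ρ)(√n x)` with the `n`-fold convolution. -/
def rescaledConv (ρ : ℝ → ℝ) (n : ℕ) (x : ℝ) : ℝ :=
  Real.sqrt n * iterConv ρ (n - 1) (Real.sqrt n * x)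

/-- The density of `(X+Y)/√2` for independent `X`, `Y` with densities `ρ`, `η`. -/
def rescaledConvPair (ρ η : ℝ → ℝ) (x : ℝ) : ℝ :=
  Real.sqrt 2 * convDens ρ η (Real.sqrt 2 * x)

/-- The rescaled self-convolution `ρ ⊛ ρ`. -/
def selfConv (ρ : ℝ → ℝ) : ℝ → ℝ := rescaledConvPair ρ ρ

/-- Entropy `S(ρ) = -∫ ρ ln ρ`. -/
def entropy (ρ : ℝ → ℝ) : ℝ := -∫ x, ρ x * Real.log (ρ x)

/-- Relative entropy `D(ρ) = ∫ ρ ln (ρ/g)` with respect to the standard Gaussian. -/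
def relEntropy (ρ : ℝ → ℝ) : ℝ := ∫ x, ρ x * Real.log (ρ x / gaussPDF x)

/-- Fisher information `I(ρ) = 4 ∫ |(√ρ)'|²`. -/
def fisherInfo (ρ : ℝ → ℝ) : ℝ := 4 * ∫ x, (deriv (fun y => Real.sqrt (ρ y)) x) ^ 2

/-- Relative Fisher information `J(ρ) = 4 ∫ |((d/dx) + x/2)√ρ|²`. -/
def relFisher (ρ : ℝ → ℝ) : ℝ :=
  4 * ∫ x, (deriv (fun y => Real.sqrt (ρ y)) x + (x / 2) * Real.sqrt (ρ x)) ^ 2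

/-- The ψ-function `ψ_ρ(R) = ∫_{|x| ≥ R} x² ρ(x) dx`. -/
def psiFun (ρ : ℝ → ℝ) (R : ℝ) : ℝ := ∫ x in {x : ℝ | R ≤ |x|}, x ^ 2 * ρ x

/-- A nonnegative function is log-concave if
`F((1-t)x + ty) ≥ F(x)^{1-t} F(y)^{t}` for `t ∈ [0,1]`. -/
def LogConcaveFun (F : ℝ → ℝ) : Prop :=
  (∀ x, 0 ≤ F x) ∧
  ∀ x y t : ℝ, 0 ≤ t → t ≤ 1 → F x ^ (1 - t) * F y ^ t ≤ F ((1 - t) * x + t * y)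


open Pointwise

theorem isLUB_range_div_sSup {ι : Type*} [Nonempty ι] {f : ι → ℝ}
    (hfb : BddAbove (range f)) (hpos : 0 < sSup (range f)) :
    IsLUB (range fun u => f u / sSup (range f)) 1 := by
  refine ⟨?_, fun c hc => ?_⟩
  · rintro _ ⟨u, rfl⟩
    exact (div_le_one hpos).2 (le_csSup hfb ⟨u, rfl⟩)
  · have hfc : ∀ u, f u ≤ c * sSup (range f) := fun u =>
      (div_le_iff₀ hpos).1 (hc ⟨u, rfl⟩)
    have := csSup_le (range_nonempty f) (forall_mem_range.2 hfc)
    nlinarith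

section

variable {α : Type*} [MeasurableSpace α] {μ : Measure α} {f : α → ℝ}

theorem sSup_range_pos_of_integral_pos (hfb : BddAbove (range f)) (hf : 0 < ∫ x, f x ∂μ) :
    0 < sSup (range f) := by
  obtain ⟨u, hu⟩ : ∃ u, 0 < f u := by
    by_contra! h
    exact (integral_nonpos h).not_gt hf
  exact hu.trans_le (le_csSup hfb ⟨u, rfl⟩)

theorem lintegral_ofReal_eq_setLIntegral_Ioo_meas_lt (hf0 : 0 ≤ f) (hf1 : ∀ x, f x ≤ 1)
    (hfm : AEMeasurable f μ) :
    ∫⁻ x, ENNReal.ofReal (f x) ∂μ = ∫⁻ s in Ioo 0 1, μ {x | s < f x} := by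
  rw [lintegral_eq_lintegral_meas_lt μ (ae_of_all _ hf0) hfm, ← Iio_inter_Ioi,
    ← Measure.restrict_restrict measurableSet_Iio, ← lintegral_indicator measurableSet_Iio]
  refine lintegral_congr fun s => ?_
  by_cases hs : s < 1
  · rw [indicator_of_mem (mem_Iio.2 hs)]
  · have hempty : {x | s < f x} = ∅ :=
      eq_empty_iff_forall_notMem.2 fun x (hx : s < f x) => hs (hx.trans_le (hf1 x))
    rw [indicator_of_notMem (mt mem_Iio.1 hs), hempty, measure_empty]

end

namespace Real

/-- `K + min L` and `max K + L` lie in `K + L` and meet only at `max K + min L`. -/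
theorem volume_add_volume_le_volume_add_of_isCompact {K L : Set ℝ} (hK : IsCompact K)
    (hL : IsCompact L) (hKne : K.Nonempty) (hLne : L.Nonempty) :
    volume K + volume L ≤ volume (K + L) := by
  set a := sSup K
  set b := sInf L
  have haK : a ∈ K := hK.sSup_mem hKne
  have hbL : b ∈ L := hL.sInf_mem hLne
  have hKb : (· + b) '' K ⊆ K + L := by
    rintro _ ⟨k, hk, rfl⟩
    exact add_mem_add hk hbL
  have haL : (a + ·) '' L ⊆ K + L := by
    rintro _ ⟨l, hl, rfl⟩
    exact add_mem_add haK hl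
  have hinter : (· + b) '' K ∩ (a + ·) '' L ⊆ {a + b} := by
    rintro _ ⟨⟨k, hk, rfl⟩, l, hl, hkl⟩
    have hka : k ≤ a := le_csSup hK.bddAbove hk
    have hbl : b ≤ l := csInf_le hL.bddBelow hl
    simp only [mem_singleton_iff]
    linarith
  have haL_meas : MeasurableSet ((a + ·) '' L) := (hL.image (continuous_const_add a)).measurableSet
  calc volume K + volume L = volume ((· + b) '' K) + volume ((a + ·) '' L) := by
        rw [image_add_right, image_add_left, measure_preimage_add_right, measure_preimage_add]
    _ = volume ((· + b) '' K ∪ (a + ·) '' L) + volume ((· + b) '' K ∩ (a + ·) '' L) :=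
        (measure_union_add_inter _ haL_meas).symm
    _ ≤ volume (K + L) + volume ({a + b} : Set ℝ) :=
        add_le_add (measure_mono (union_subset hKb haL)) (measure_mono hinter)
    _ = volume (K + L) := by simp

theorem volume_add_volume_le_volume_add {A B : Set ℝ} (hA : MeasurableSet A)
    (hB : MeasurableSet B) (hAne : A.Nonempty) (hBne : B.Nonempty) :
    volume A + volume B ≤ volume (A + B) := by
  obtain ⟨a, ha⟩ := hAne
  obtain ⟨b, hb⟩ := hBne
  rw [hA.measure_eq_iSup_isCompact, hB.measure_eq_iSup_isCompact]
  simp only [iSup_and']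
  refine ENNReal.biSup_add_biSup_le' ⟨∅, empty_subset _, isCompact_empty⟩
    ⟨∅, empty_subset _, isCompact_empty⟩ fun K ⟨hKA, hK⟩ L ⟨hLB, hL⟩ => ?_
  calc volume K + volume L ≤ volume (insert a K) + volume (insert b L) :=
        add_le_add (measure_mono (subset_insert _ _)) (measure_mono (subset_insert _ _))
    _ ≤ volume (insert a K + insert b L) :=
        volume_add_volume_le_volume_add_of_isCompact (hK.insert a) (hL.insert b)
          (insert_nonempty _ _) (insert_nonempty _ _)
    _ ≤ volume (A + B) :=
        measure_mono (add_subset_add (insert_subset ha hKA) (insert_subset hb hLB))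

theorem lt_rpow_mul_rpow {s a b t : ℝ} (hs : 0 ≤ s) (ha : s < a) (hb : s < b)
    (ht0 : 0 < t) (ht1 : t < 1) : s < a ^ (1 - t) * b ^ t := by
  calc s = s ^ (1 - t) * s ^ t := by
        rw [← rpow_add' hs (by norm_num), sub_add_cancel, rpow_one]
    _ < a ^ (1 - t) * b ^ t :=
        mul_lt_mul'' (rpow_lt_rpow hs ha (by linarith)) (rpow_lt_rpow hs hb ht0)
          (rpow_nonneg hs _) (rpow_nonneg hs _)

theorem mul_rpow_mul_rpow_le {a b c d e f t : ℝ} (ha : 0 ≤ a) (hb : 0 ≤ b) (hc : 0 ≤ c)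
    (hd : 0 ≤ d) (hac : a ^ (1 - t) * c ^ t ≤ e) (hbd : b ^ (1 - t) * d ^ t ≤ f) :
    (a * b) ^ (1 - t) * (c * d) ^ t ≤ e * f := by
  rw [mul_rpow ha hb, mul_rpow hc hd, mul_mul_mul_comm]
  exact mul_le_mul hac hbd (by positivity) ((by positivity : 0 ≤ a ^ (1 - t) * c ^ t).trans hac)

section PrekopaLeindler

variable {t : ℝ} {f g h : ℝ → ℝ}

theorem volume_superlevel_add_le (ht0 : 0 < t) (ht1 : t < 1) (hfm : Measurable f)
    (hgm : Measurable g) (hf1 : IsLUB (range f) 1) (hg1 : IsLUB (range g) 1)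
    (hyp : ∀ u v, f u ^ (1 - t) * g v ^ t ≤ h ((1 - t) * u + t * v)) {s : ℝ}
    (hs : s ∈ Ioo 0 1) :
    ENNReal.ofReal (1 - t) * volume {u | s < f u} + ENNReal.ofReal t * volume {v | s < g v}
      ≤ volume {w | s < h w} := by
  obtain ⟨_, ⟨u₀, rfl⟩, hu₀, -⟩ := hf1.exists_between hs.2
  obtain ⟨_, ⟨v₀, rfl⟩, hv₀, -⟩ := hg1.exists_between hs.2
  have hA : MeasurableSet {u | s < f u} := measurableSet_lt measurable_const hfm
  have hB : MeasurableSet {v | s < g v} := measurableSet_lt measurable_const hgm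
  calc ENNReal.ofReal (1 - t) * volume {u | s < f u} + ENNReal.ofReal t * volume {v | s < g v}
      = volume ((1 - t) • {u | s < f u}) + volume (t • {v | s < g v}) := by
        simp [Measure.addHaar_smul_of_nonneg volume (sub_nonneg.2 ht1.le),
          Measure.addHaar_smul_of_nonneg volume ht0.le]
    _ ≤ volume ((1 - t) • {u | s < f u} + t • {v | s < g v}) :=
        volume_add_volume_le_volume_add (hA.const_smul_of_ne_zero (by linarith))
          (hB.const_smul_of_ne_zero ht0.ne') (Nonempty.smul_set ⟨u₀, hu₀⟩)
          (Nonempty.smul_set ⟨v₀, hv₀⟩)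
    _ ≤ volume {w | s < h w} := by
        refine measure_mono ?_
        rintro _ ⟨_, ⟨u, hu, rfl⟩, _, ⟨v, hv, rfl⟩, rfl⟩
        exact (lt_rpow_mul_rpow hs.1.le hu hv ht0 ht1).trans_le (hyp u v)

theorem add_integral_le_integral_of_isLUB (ht0 : 0 < t) (ht1 : t < 1) (hfm : Measurable f)
    (hgm : Measurable g) (hf0 : 0 ≤ f) (hg0 : 0 ≤ g) (hh0 : 0 ≤ h) (hfi : Integrable f)
    (hgi : Integrable g) (hhi : Integrable h) (hf1 : IsLUB (range f) 1)
    (hg1 : IsLUB (range g) 1) (hyp : ∀ u v, f u ^ (1 - t) * g v ^ t ≤ h ((1 - t) * u + t * v)) :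
    (1 - t) * (∫ x, f x) + t * ∫ x, g x ≤ ∫ x, h x := by
  have hφf : Measurable fun s => volume {u | s < f u} :=
    (Antitone.measurable fun _ _ hss => measure_mono fun _ hu => hss.trans_lt hu)
  have hφg : Measurable fun s => volume {v | s < g v} :=
    (Antitone.measurable fun _ _ hss => measure_mono fun _ hv => hss.trans_lt hv)
  have hlayer : ENNReal.ofReal ((1 - t) * (∫ x, f x) + t * ∫ x, g x)
      = ∫⁻ s in Ioo 0 1, (ENNReal.ofReal (1 - t) * volume {u | s < f u}
          + ENNReal.ofReal t * volume {v | s < g v}) := by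
    rw [ENNReal.ofReal_add (mul_nonneg (sub_nonneg.2 ht1.le) (integral_nonneg hf0))
        (mul_nonneg ht0.le (integral_nonneg hg0)),
      ENNReal.ofReal_mul (by linarith), ENNReal.ofReal_mul ht0.le,
      ofReal_integral_eq_lintegral_ofReal hfi (ae_of_all _ hf0),
      ofReal_integral_eq_lintegral_ofReal hgi (ae_of_all _ hg0),
      lintegral_ofReal_eq_setLIntegral_Ioo_meas_lt hf0 (fun u => hf1.1 ⟨u, rfl⟩)
        hfm.aemeasurable,
      lintegral_ofReal_eq_setLIntegral_Ioo_meas_lt hg0 (fun v => hg1.1 ⟨v, rfl⟩)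
        hgm.aemeasurable,
      lintegral_add_left (hφf.const_mul _), lintegral_const_mul _ hφf, lintegral_const_mul _ hφg]
  have hle :
      ENNReal.ofReal ((1 - t) * (∫ x, f x) + t * ∫ x, g x) ≤ ENNReal.ofReal (∫ x, h x) := by
    rw [hlayer, ofReal_integral_eq_lintegral_ofReal hhi (ae_of_all _ hh0),
      lintegral_eq_lintegral_meas_lt _ (ae_of_all _ hh0) hhi.aemeasurable]
    exact (setLIntegral_mono' measurableSet_Ioo fun s hs =>
      volume_superlevel_add_le ht0 ht1 hfm hgm hf1 hg1 hyp hs).trans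
      (lintegral_mono_set Ioo_subset_Ioi_self)
  exact (ENNReal.ofReal_le_ofReal_iff (integral_nonneg hh0)).1 hle

theorem prekopa_leindler (ht0 : 0 < t) (ht1 : t < 1) (hfm : Measurable f)
    (hgm : Measurable g) (hf0 : 0 ≤ f) (hg0 : 0 ≤ g) (hh0 : 0 ≤ h)
    (hfi : Integrable f) (hgi : Integrable g) (hhi : Integrable h)
    (hfb : BddAbove (range f)) (hgb : BddAbove (range g))
    (hyp : ∀ u v, f u ^ (1 - t) * g v ^ t ≤ h ((1 - t) * u + t * v)) :
    (∫ x, f x) ^ (1 - t) * (∫ x, g x) ^ t ≤ ∫ x, h x := by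
  rcases (integral_nonneg hf0).eq_or_lt with hIf | hIf
  · rw [← hIf, zero_rpow (by linarith), zero_mul]
    exact integral_nonneg hh0
  rcases (integral_nonneg hg0).eq_or_lt with hIg | hIg
  · rw [← hIg, zero_rpow ht0.ne', mul_zero]
    exact integral_nonneg hh0
  -- Normalize `f` and `g` to supremum `1`; weighted AM–GM then turns the additive form back into
  -- the multiplicative one.
  set Mf := sSup (range f)
  set Mg := sSup (range g)
  have hMf : 0 < Mf := sSup_range_pos_of_integral_pos hfb hIf
  have hMg : 0 < Mg := sSup_range_pos_of_integral_pos hgb hIg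
  set H := Mf ^ (1 - t) * Mg ^ t
  have hH : 0 < H := by positivity
  have hnormalized := add_integral_le_integral_of_isLUB ht0 ht1 (h := fun w => h w / H)
    (hfm.div_const Mf) (hgm.div_const Mg) (fun u => div_nonneg (hf0 u) hMf.le)
    (fun v => div_nonneg (hg0 v) hMg.le) (fun w => div_nonneg (hh0 w) hH.le)
    (hfi.div_const Mf) (hgi.div_const Mg) (hhi.div_const H)
    (isLUB_range_div_sSup hfb hMf) (isLUB_range_div_sSup hgb hMg) fun u v => by
      rw [div_rpow (hf0 u) hMf.le, div_rpow (hg0 v) hMg.le, div_mul_div_comm]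
      exact div_le_div_of_nonneg_right (hyp u v) hH.le
  rw [integral_div, integral_div, integral_div] at hnormalized
  set a := (∫ x, f x) / Mf
  set b := (∫ x, g x) / Mg
  have amgm : a ^ (1 - t) * b ^ t ≤ (1 - t) * a + t * b :=
    geom_mean_le_arith_mean2_weighted (by linarith) ht0.le (by positivity) (by positivity)
      (by ring)
  calc (∫ x, f x) ^ (1 - t) * (∫ x, g x) ^ t = H * (a ^ (1 - t) * b ^ t) := by
        simp only [H, a, b]
        rw [div_rpow hIf.le hMf.le, div_rpow hIg.le hMg.le]
        field_simp
    _ ≤ H * ((∫ x, h x) / H) := by gcongr; exact amgm.trans hnormalized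
    _ = ∫ x, h x := mul_div_cancel₀ _ hH.ne'

end PrekopaLeindler

end Real

theorem mul_sub_le_abs_mul_add_abs (k a b : ℝ) : k * (a - b) ≤ |k| * (|a| + |b|) :=
  calc k * (a - b) ≤ |k * (a - b)| := le_abs_self _
    _ = |k| * |a - b| := abs_mul _ _
    _ ≤ |k| * (|a| + |b|) := by gcongr; exact abs_sub a b

namespace LogConcaveFun

variable {F : ℝ → ℝ}

theorem comp_neg (hF : LogConcaveFun F) : LogConcaveFun fun v => F (-v) := by
  refine ⟨fun x => hF.1 _, fun x y t ht0 ht1 => ?_⟩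
  have h := hF.2 (-x) (-y) t ht0 ht1
  rwa [show (1 - t) * -x + t * -y = -((1 - t) * x + t * y) by ring] at h

theorem le_mul_exp_of_le (hF : LogConcaveFun F) {p q u : ℝ} (hpq : p < q) (hFp : 0 < F p)
    (hqu : q ≤ u) :
    F u ≤ F p * exp ((log (F q) - log (F p)) / (q - p) * (u - p)) := by
  rcases (hF.1 u).eq_or_lt with hFu | hFu
  · rw [← hFu]
    positivity
  have hqp : 0 < q - p := by linarith
  have hup : 0 < u - p := by linarith
  set s := (q - p) / (u - p)
  have hs0 : 0 < s := div_pos hqp hup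
  have hs1 : s ≤ 1 := (div_le_one hup).2 (by linarith)
  have hq : (1 - s) * p + s * u = q := by
    simp only [s]
    field_simp
    ring
  have hlc := hF.2 p u s hs0.le hs1
  rw [hq] at hlc
  have hlog : (1 - s) * log (F p) + s * log (F u) ≤ log (F q) := by
    have := log_le_log (by positivity) hlc
    rwa [log_mul (by positivity) (by positivity), log_rpow hFp, log_rpow hFu] at this
  have hslope : s * ((log (F q) - log (F p)) / (q - p) * (u - p)) = log (F q) - log (F p) := by
    simp only [s]
    field_simp
  have hlogu : log (F u) ≤ log (F p) + (log (F q) - log (F p)) / (q - p) * (u - p) := by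
    refine le_of_mul_le_mul_left ?_ hs0
    nlinarith
  calc F u = exp (log (F u)) := (exp_log hFu).symm
    _ ≤ exp (log (F p) + (log (F q) - log (F p)) / (q - p) * (u - p)) := exp_le_exp.2 hlogu
    _ = F p * exp ((log (F q) - log (F p)) / (q - p) * (u - p)) := by rw [exp_add, exp_log hFp]

theorem exists_le_mul_exp_abs (hF : LogConcaveFun F) :
    ∃ C B : ℝ, 0 ≤ C ∧ 0 ≤ B ∧ ∀ u, F u ≤ C * exp (B * |u|) := by
  by_cases htwo : ∃ p q, p < q ∧ 0 < F p ∧ 0 < F q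
  · -- right of the midpoint `c` use the chord over `[p, c]`, left of it the one over `[c, q]`
    obtain ⟨p, q, hpq, hFp, hFq⟩ := htwo
    set c := (p + q) / 2
    set k₁ := (log (F c) - log (F p)) / (c - p)
    set k₂ := (log (F c) - log (F q)) / (q - c)
    refine ⟨max (F p * exp (|k₁| * |p|)) (F q * exp (|k₂| * |q|)), max |k₁| |k₂|,
      le_max_of_le_left (by positivity), le_max_of_le_left (abs_nonneg _), fun u => ?_⟩
    rcases le_total c u with hcu | huc
    · calc F u ≤ F p * exp (k₁ * (u - p)) :=
            hF.le_mul_exp_of_le (by simp only [c]; linarith) hFp hcu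
        _ ≤ F p * exp (|k₁| * |p|) * exp (|k₁| * |u|) := by
            rw [mul_assoc, ← exp_add]
            gcongr
            linarith [mul_sub_le_abs_mul_add_abs k₁ u p]
        _ ≤ _ := by gcongr <;> apply le_max_left
    · have h := hF.comp_neg.le_mul_exp_of_le (p := -q) (q := -c) (u := -u)
        (by simp only [c]; linarith) (by simpa using hFq) (by linarith)
      simp only [neg_neg, sub_neg_eq_add, neg_add_eq_sub] at h
      calc F u ≤ F q * exp (k₂ * (q - u)) := h
        _ ≤ F q * exp (|k₂| * |q|) * exp (|k₂| * |u|) := by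
            rw [mul_assoc, ← exp_add]
            gcongr
            linarith [mul_sub_le_abs_mul_add_abs k₂ q u]
        _ ≤ _ := by gcongr <;> apply le_max_right
  · -- otherwise `F` vanishes off at most one point
    push Not at htwo
    by_cases hone : ∃ p, 0 < F p
    · obtain ⟨p, hFp⟩ := hone
      refine ⟨F p, 0, hFp.le, le_rfl, fun u => ?_⟩
      rw [zero_mul, exp_zero, mul_one]
      rcases lt_trichotomy u p with hup | rfl | hpu
      · exact le_of_not_gt fun h => (htwo u p hup (hFp.trans h)).not_gt hFp
      · exact le_rfl
      · exact (htwo p u hpu hFp).trans hFp.le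
    · push Not at hone
      exact ⟨0, 0, le_rfl, le_rfl, fun u => by simpa using hone u⟩

end LogConcaveFun

theorem gaussPDF_pos (x : ℝ) : 0 < gaussPDF x := by
  unfold gaussPDF
  positivity

@[fun_prop]
theorem continuous_gaussPDF : Continuous gaussPDF := by
  unfold gaussPDF
  fun_prop

theorem logConcaveFun_gaussPDF : LogConcaveFun gaussPDF := by
  refine ⟨fun x => (gaussPDF_pos x).le, fun x y t ht0 ht1 => ?_⟩
  have hc : 0 < (√(2 * π))⁻¹ := by positivity
  unfold gaussPDF
  rw [mul_rpow hc.le (exp_pos _).le, mul_rpow hc.le (exp_pos _).le, ← exp_mul, ← exp_mul,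
    mul_mul_mul_comm, ← rpow_add hc, sub_add_cancel, rpow_one, ← exp_add]
  gcongr
  nlinarith [sq_nonneg (x - y), mul_nonneg ht0 (sub_nonneg.2 ht1)]

/-- Both sides are `(2π)⁻¹ exp (-(x² - √2 x y + y²))`. -/
theorem gaussPDF_mul_gaussPDF_rotate (x y : ℝ) :
    gaussPDF (√2 * x - y) * gaussPDF y = gaussPDF x * gaussPDF (√2 * y - x) := by
  have hs : √2 ^ 2 = 2 := sq_sqrt (by norm_num)
  unfold gaussPDF
  rw [mul_mul_mul_comm, mul_mul_mul_comm _ (exp _), ← exp_add, ← exp_add]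
  congr 2
  linear_combination (y ^ 2 - x ^ 2) / 2 * hs

/-- `ρ ⊛ ρ = g F₂` with `F₂ x = ∫ y, selfConvIntegrand F x y`. -/
def selfConvIntegrand (F : ℝ → ℝ) (x y : ℝ) : ℝ :=
  gaussPDF y * (F ((x + y) / √2) * F ((x - y) / √2))

theorem selfConv_gaussPDF_mul (F : ℝ → ℝ) (x : ℝ) :
    selfConv (fun y => gaussPDF y * F y) x = gaussPDF x * ∫ y, selfConvIntegrand F x y := by
  have hs : √2 ^ 2 = 2 := sq_sqrt (by norm_num)
  have hs0 : 0 < √2 := by positivity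
  have hintegrand : ∀ y, gaussPDF (√2 * x - y) * F (√2 * x - y) * (gaussPDF y * F y)
      = gaussPDF x * selfConvIntegrand F x (√2 * y - x) := by
    intro y
    have h₁ : (x + (√2 * y - x)) / √2 = y := by field_simp; ring
    have h₂ : (x - (√2 * y - x)) / √2 = √2 * x - y := by
      field_simp
      linear_combination (-x) * hs
    rw [selfConvIntegrand, h₁, h₂, ← mul_assoc (gaussPDF x), ← gaussPDF_mul_gaussPDF_rotate]
    ring
  have hsubst : ∫ y, selfConvIntegrand F x (√2 * y - x)
      = (√2)⁻¹ * ∫ y, selfConvIntegrand F x y := by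
    rw [Measure.integral_comp_mul_left (fun z => selfConvIntegrand F x (z - x)),
      integral_sub_right_eq_self, smul_eq_mul, abs_of_pos (inv_pos.2 hs0)]
  simp only [selfConv, rescaledConvPair, convDens, hintegrand]
  rw [integral_const_mul, hsubst]
  field_simp

namespace LogConcaveFun

variable {F : ℝ → ℝ}

theorem selfConvIntegrand_nonneg (hF : LogConcaveFun F) (x y : ℝ) :
    0 ≤ selfConvIntegrand F x y :=
  mul_nonneg (gaussPDF_pos y).le (mul_nonneg (hF.1 _) (hF.1 _))

theorem selfConvIntegrand_rpow_mul_rpow_le (hF : LogConcaveFun F) {t : ℝ} (ht0 : 0 ≤ t)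
    (ht1 : t ≤ 1) (x y u v : ℝ) :
    selfConvIntegrand F x u ^ (1 - t) * selfConvIntegrand F y v ^ t
      ≤ selfConvIntegrand F ((1 - t) * x + t * y) ((1 - t) * u + t * v) := by
  have e₁ : ((1 - t) * x + t * y + ((1 - t) * u + t * v)) / √2
      = (1 - t) * ((x + u) / √2) + t * ((y + v) / √2) := by ring
  have e₂ : ((1 - t) * x + t * y - ((1 - t) * u + t * v)) / √2
      = (1 - t) * ((x - u) / √2) + t * ((y - v) / √2) := by ring
  rw [selfConvIntegrand, selfConvIntegrand, selfConvIntegrand, e₁, e₂]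
  exact mul_rpow_mul_rpow_le (gaussPDF_pos _).le (mul_nonneg (hF.1 _) (hF.1 _))
    (gaussPDF_pos _).le (mul_nonneg (hF.1 _) (hF.1 _)) (logConcaveFun_gaussPDF.2 _ _ _ ht0 ht1)
    (mul_rpow_mul_rpow_le (hF.1 _) (hF.1 _) (hF.1 _) (hF.1 _) (hF.2 _ _ _ ht0 ht1)
      (hF.2 _ _ _ ht0 ht1))

theorem measurable_selfConvIntegrand (hFmeas : Measurable F) (x : ℝ) :
    Measurable (selfConvIntegrand F x) := by
  unfold selfConvIntegrand
  fun_prop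

theorem exists_selfConvIntegrand_le (hF : LogConcaveFun F) (x : ℝ) :
    ∃ D, 0 ≤ D ∧ ∀ y, selfConvIntegrand F x y ≤ D * exp (-(1 / 4) * y ^ 2) := by
  obtain ⟨C, B, hC, hB, hCB⟩ := hF.exists_le_mul_exp_abs
  refine ⟨(√(2 * π))⁻¹ * C ^ 2 * exp (2 * B * |x|) * exp (4 * B ^ 2), by positivity,
    fun y => ?_⟩
  have hF_le : ∀ z, |z| ≤ |x| + |y| → F (z / √2) ≤ C * exp (B * (|x| + |y|)) := by
    intro z hz
    have hz' : |z / √2| ≤ |x| + |y| := by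
      rw [abs_div, abs_of_pos (by positivity : (0 : ℝ) < √2)]
      exact (div_le_self (abs_nonneg z) (one_le_sqrt.2 one_le_two)).trans hz
    exact (hCB _).trans (by gcongr)
  have hexp :
      -y ^ 2 / 2 + 2 * (B * (|x| + |y|)) ≤ 2 * B * |x| + 4 * B ^ 2 + -(1 / 4) * y ^ 2 := by
    nlinarith [sq_nonneg (|y| / 2 - 2 * B), sq_abs y]
  calc selfConvIntegrand F x y
      ≤ gaussPDF y * ((C * exp (B * (|x| + |y|))) * (C * exp (B * (|x| + |y|)))) := by
        refine mul_le_mul_of_nonneg_left ?_ (gaussPDF_pos y).le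
        exact mul_le_mul (hF_le _ (abs_add_le x y)) (hF_le _ (abs_sub x y)) (hF.1 _)
          (by positivity)
    _ = (√(2 * π))⁻¹ * C ^ 2 * exp (-y ^ 2 / 2 + 2 * (B * (|x| + |y|))) := by
        unfold gaussPDF
        rw [exp_add, two_mul (B * _), exp_add]
        ring
    _ ≤ (√(2 * π))⁻¹ * C ^ 2 * exp (2 * B * |x| + 4 * B ^ 2 + -(1 / 4) * y ^ 2) := by gcongr
    _ = _ := by rw [exp_add, exp_add]; ring

theorem integrable_selfConvIntegrand (hF : LogConcaveFun F) (hFmeas : Measurable F) (x : ℝ) :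
    Integrable (selfConvIntegrand F x) := by
  obtain ⟨D, -, hD⟩ := hF.exists_selfConvIntegrand_le x
  refine ((integrable_exp_neg_mul_sq (by norm_num : (0 : ℝ) < 1 / 4)).const_mul D).mono'
    (measurable_selfConvIntegrand hFmeas x).aestronglyMeasurable (ae_of_all _ fun y => ?_)
  rw [norm_of_nonneg (hF.selfConvIntegrand_nonneg x y)]
  exact hD y

theorem bddAbove_range_selfConvIntegrand (hF : LogConcaveFun F) (x : ℝ) :
    BddAbove (range (selfConvIntegrand F x)) := by
  obtain ⟨D, hD0, hD⟩ := hF.exists_selfConvIntegrand_le x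
  refine ⟨D, forall_mem_range.2 fun y => (hD y).trans ?_⟩
  exact mul_le_of_le_one_right hD0 (exp_le_one_iff.2 (by nlinarith [sq_nonneg y]))

theorem integral_selfConvIntegrand (hF : LogConcaveFun F) (hFmeas : Measurable F) :
    LogConcaveFun fun x => ∫ y, selfConvIntegrand F x y := by
  refine ⟨fun x => integral_nonneg (hF.selfConvIntegrand_nonneg x), fun x y t ht0 ht1 => ?_⟩
  rcases ht0.eq_or_lt with rfl | ht0'
  · simp
  rcases ht1.eq_or_lt with rfl | ht1'
  · simp
  exact Real.prekopa_leindler ht0' ht1' (measurable_selfConvIntegrand hFmeas x)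
    (measurable_selfConvIntegrand hFmeas y) (hF.selfConvIntegrand_nonneg x)
    (hF.selfConvIntegrand_nonneg y) (hF.selfConvIntegrand_nonneg _)
    (hF.integrable_selfConvIntegrand hFmeas x) (hF.integrable_selfConvIntegrand hFmeas y)
    (hF.integrable_selfConvIntegrand hFmeas _) (hF.bddAbove_range_selfConvIntegrand x)
    (hF.bddAbove_range_selfConvIntegrand y) (hF.selfConvIntegrand_rpow_mul_rpow_le ht0 ht1 x y)

end LogConcaveFun

theorem logconcave_factor_propagation_general (F : ℝ → ℝ) (hFmeas : Measurable F)
    (hF : LogConcaveFun F) :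
    (∀ x, selfConv (fun y => gaussPDF y * F y) x
        = gaussPDF x *
          ∫ y, gaussPDF y * (F ((x + y) / Real.sqrt 2) * F ((x - y) / Real.sqrt 2))) ∧
    LogConcaveFun
      (fun x => ∫ y, gaussPDF y * (F ((x + y) / Real.sqrt 2) * F ((x - y) / Real.sqrt 2))) :=
  ⟨selfConv_gaussPDF_mul F, hF.integral_selfConvIntegrand hFmeas⟩

/-- If `ρ = gF` with `F` log-concave, then `ρ ⊛ ρ = g F₂` with
`F₂(x) = ∫ g(y) F((x+y)/√2) F((x-y)/√2) dy` log-concave. -/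
theorem logconcave_factor_propagation (F : ℝ → ℝ) (hFmeas : Measurable F)
    (hF : LogConcaveFun F)
    (hint : Integrable fun x => gaussPDF x * F x)
    (hmass : ∫ x, gaussPDF x * F x = 1) :
    (∀ x, selfConv (fun y => gaussPDF y * F y) x
        = gaussPDF x *
          ∫ y, gaussPDF y * (F ((x + y) / Real.sqrt 2) * F ((x - y) / Real.sqrt 2))) ∧
    LogConcaveFun
      (fun x => ∫ y, gaussPDF y * (F ((x + y) / Real.sqrt 2) * F ((x - y) / Real.sqrt 2))) :=
  logconcave_factor_propagation_general F hFmeas hF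
end
end

section
/- Let ρ be a probability density on ℝ with finite second moment, and for t ≥ 0 let P_t*ρ be the density of e^{−t}X + (1 − e^{−2t})^{1/2}G where X has density ρ and G is an independent standard Gaussian. Then for every R > 0, the ψ-function of P_t*ρ satisfies ψ_{P_t*ρ}(R) ≤ ψ_ρ(R/2) + ψ_g(R/2), where g is the standard Gaussian density. -/
open MeasureTheory Real Set

noncomputable section

/-- `ouDens ρ t` is the density of `e^{-t} X + (1 - e^{-2t})^{1/2} G` for `X` with
density `ρ` and `G` an independent standard Gaussian (the Ornstein–Uhlenbeck flow). -/
def ouDens (ρ : ℝ → ℝ) (t : ℝ) (x : ℝ) : ℝ :=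
  ∫ y, ρ y * ((Real.sqrt (2 * Real.pi * (1 - Real.exp (-2 * t))))⁻¹ *
    Real.exp (-(x - Real.exp (-t) * y) ^ 2 / (2 * (1 - Real.exp (-2 * t)))))


/-!
With `c = e^{-t}` and `σ = (1 - e^{-2t})^{1/2}`, so that `c² + σ² = 1`, `P_t*ρ` is the law of
`Z = cX + σG` and `ψ_{P_t*ρ}(R) = E[Z²; |Z| ≥ R]`. As `G` and `-G` have the same law, this is half
the expectation of `(cX + σG)² 1{|cX + σG| ≥ R} + (cX - σG)² 1{|cX - σG| ≥ R}`, which is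
pointwise at most `2 (X² 1{|X| ≥ R/2} + G² 1{|G| ≥ R/2})`: if `|X|, |G| < R/2` then
`(cX ± σG)² ≤ X² + G² < R²` and both terms vanish; otherwise each of `X²`, `G²` is bounded by
the tail term that is present, and
`(cX + σG)² + (cX - σG)² = 2 (c²X² + σ²G²)`.
-/

open ProbabilityTheory
open scoped ENNReal NNReal

lemma ofReal_integral_le_lintegral_ofReal {α : Type*} [MeasurableSpace α] {μ : Measure α}
    {f : α → ℝ} (hf : ∀ x, 0 ≤ f x) :
    ENNReal.ofReal (∫ x, f x ∂μ) ≤ ∫⁻ x, ENNReal.ofReal (f x) ∂μ :=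
  calc ENNReal.ofReal (∫ x, f x ∂μ) ≤ ‖∫ x, f x ∂μ‖ₑ := Real.ofReal_le_enorm _
    _ ≤ ∫⁻ x, ‖f x‖ₑ ∂μ := enorm_integral_le_lintegral_enorm _
    _ = ∫⁻ x, ENNReal.ofReal (f x) ∂μ := lintegral_congr fun x => Real.enorm_eq_ofReal (hf x)

def tailSq (R x : ℝ) : ℝ := {x : ℝ | R ≤ |x|}.indicator (fun x => x ^ 2) x

lemma tailSq_nonneg (R x : ℝ) : 0 ≤ tailSq R x :=
  indicator_nonneg (fun x _ => sq_nonneg x) x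

@[fun_prop]
lemma measurable_tailSq (R : ℝ) : Measurable (tailSq R) :=
  (measurable_id.pow_const 2).indicator (measurableSet_le measurable_const measurable_abs)

lemma tailSq_le_sq (R x : ℝ) : tailSq R x ≤ x ^ 2 :=
  indicator_le_self' (fun x _ => sq_nonneg x) x

lemma tailSq_of_le {R x : ℝ} (h : R ≤ |x|) : tailSq R x = x ^ 2 :=
  indicator_of_mem (s := {x : ℝ | R ≤ |x|}) h _

lemma tailSq_of_lt {R x : ℝ} (h : |x| < R) : tailSq R x = 0 :=
  indicator_of_notMem (s := {x : ℝ | R ≤ |x|}) (not_le.2 h) _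

lemma sq_le_tailSq_add_tailSq {R y w : ℝ} (h : R ≤ |y| ∨ R ≤ |w|) :
    y ^ 2 ≤ tailSq R y + tailSq R w := by
  by_cases hy : R ≤ |y|
  · rw [tailSq_of_le hy]
    linarith [tailSq_nonneg R w]
  · have hw : R ≤ |w| := h.resolve_left hy
    rw [tailSq_of_lt (not_le.1 hy), tailSq_of_le hw, zero_add, ← sq_abs y, ← sq_abs w]
    exact pow_le_pow_left₀ (abs_nonneg y) ((not_le.1 hy).le.trans hw) 2

lemma tailSq_add_tailSq_sub_le {c σ : ℝ} (hcσ : c ^ 2 + σ ^ 2 = 1) (R y w : ℝ) :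
    tailSq R (c * y + σ * w) + tailSq R (c * y - σ * w)
      ≤ 2 * (tailSq (R / 2) y + tailSq (R / 2) w) := by
  have hT := add_nonneg (tailSq_nonneg (R / 2) y) (tailSq_nonneg (R / 2) w)
  by_cases hsmall : |y| < R / 2 ∧ |w| < R / 2
  · -- Cauchy–Schwarz: `(c y ± σ w)² ≤ y² + w² < R² / 2`.
    have hR : 0 ≤ R := by linarith [abs_nonneg y, hsmall.1]
    have hy : y ^ 2 < (R / 2) ^ 2 := sq_lt_sq' (by linarith [neg_abs_le y]) (lt_of_abs_lt hsmall.1)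
    have hw : w ^ 2 < (R / 2) ^ 2 := sq_lt_sq' (by linarith [neg_abs_le w]) (lt_of_abs_lt hsmall.2)
    rw [tailSq_of_lt (abs_lt_of_sq_lt_sq (by nlinarith [sq_nonneg (c * w - σ * y)]) hR),
      tailSq_of_lt (abs_lt_of_sq_lt_sq (by nlinarith [sq_nonneg (c * w + σ * y)]) hR)]
    linarith
  · have hlarge : R / 2 ≤ |y| ∨ R / 2 ≤ |w| := by
      rw [not_and_or, not_lt, not_lt] at hsmall
      exact hsmall
    have hy := sq_le_tailSq_add_tailSq hlarge
    have hw := sq_le_tailSq_add_tailSq hlarge.symm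
    rw [add_comm (tailSq _ w)] at hw
    have hsum : (c * y + σ * w) ^ 2 + (c * y - σ * w) ^ 2
        = 2 * (c ^ 2 * y ^ 2 + σ ^ 2 * w ^ 2) := by ring
    nlinarith [tailSq_le_sq R (c * y + σ * w), tailSq_le_sq R (c * y - σ * w),
      mul_le_mul_of_nonneg_left hy (sq_nonneg c), mul_le_mul_of_nonneg_left hw (sq_nonneg σ)]

lemma tailSq_mul_eq_indicator (R : ℝ) (f : ℝ → ℝ) :
    (fun x => tailSq R x * f x) = {x : ℝ | R ≤ |x|}.indicator fun x => x ^ 2 * f x :=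
  funext fun _ => (indicator_mul_left _ _ _).symm

lemma psiFun_eq_integral_tailSq_mul (f : ℝ → ℝ) (R : ℝ) :
    psiFun f R = ∫ x, tailSq R x * f x := by
  rw [tailSq_mul_eq_indicator,
    integral_indicator (measurableSet_le measurable_const measurable_abs), psiFun]

lemma psiFun_nonneg {f : ℝ → ℝ} (hf : ∀ x, 0 ≤ f x) (R : ℝ) : 0 ≤ psiFun f R :=
  setIntegral_nonneg (measurableSet_le measurable_const measurable_abs)
    fun x _ => mul_nonneg (sq_nonneg x) (hf x)

lemma ofReal_psiFun_le {f : ℝ → ℝ} (hf : ∀ x, 0 ≤ f x) (R : ℝ) :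
    ENNReal.ofReal (psiFun f R) ≤ ∫⁻ x, ENNReal.ofReal (tailSq R x) * ENNReal.ofReal (f x) := by
  rw [psiFun_eq_integral_tailSq_mul]
  exact (ofReal_integral_le_lintegral_ofReal fun x =>
    mul_nonneg (tailSq_nonneg R x) (hf x)).trans_eq (lintegral_congr fun x => ENNReal.ofReal_mul (tailSq_nonneg R x))

lemma lintegral_tailSq_withDensity {f : ℝ → ℝ} (hmeas : Measurable f) (hf : ∀ x, 0 ≤ f x)
    (hmom2 : Integrable fun x => x ^ 2 * f x) (R : ℝ) :
    ∫⁻ x, ENNReal.ofReal (tailSq R x) ∂volume.withDensity (fun x => ENNReal.ofReal (f x))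
      = ENNReal.ofReal (psiFun f R) := by
  have hint : Integrable fun x => tailSq R x * f x := by
    rw [tailSq_mul_eq_indicator]
    exact hmom2.indicator (measurableSet_le measurable_const measurable_abs)
  rw [lintegral_withDensity_eq_lintegral_mul _ hmeas.ennreal_ofReal
    (measurable_tailSq R).ennreal_ofReal, psiFun_eq_integral_tailSq_mul,
    ofReal_integral_eq_lintegral_ofReal hint
      (ae_of_all _ fun x => mul_nonneg (tailSq_nonneg R x) (hf x))]
  exact lintegral_congr fun x => by
    rw [Pi.mul_apply, mul_comm, ENNReal.ofReal_mul (tailSq_nonneg R x)]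

lemma isProbabilityMeasure_withDensity_ofReal {f : ℝ → ℝ} (hf : ∀ x, 0 ≤ f x)
    (hmass : ∫ x, f x = 1) :
    IsProbabilityMeasure (volume.withDensity fun x => ENNReal.ofReal (f x)) := by
  constructor
  rw [withDensity_apply _ MeasurableSet.univ, Measure.restrict_univ,
    ← ofReal_integral_eq_lintegral_ofReal (Integrable.of_integral_ne_zero (by simp [hmass]))
      (ae_of_all _ hf), hmass, ENNReal.ofReal_one]

lemma gaussPDF_eq_gaussianPDFReal : gaussPDF = gaussianPDFReal 0 1 := by
  funext x
  simp [gaussPDF, gaussianPDFReal]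

lemma gaussPDF_nonneg (x : ℝ) : 0 ≤ gaussPDF x := by
  rw [gaussPDF_eq_gaussianPDFReal]
  exact gaussianPDFReal_nonneg 0 1 x

lemma integrable_sq_mul_gaussianPDFReal (m : ℝ) {v : ℝ≥0} (hv : v ≠ 0) :
    Integrable fun x => x ^ 2 * gaussianPDFReal m v x := by
  have h := (memLp_id_gaussianReal (μ := m) (v := v) 2).integrable_sq
  rw [gaussianReal_of_var_ne_zero _ hv, integrable_withDensity_iff
    (measurable_gaussianPDF m v) (ae_of_all _ fun _ => gaussianPDF_lt_top)] at h
  simpa using h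

lemma lintegral_tailSq_gaussianReal (R : ℝ) :
    ∫⁻ x, ENNReal.ofReal (tailSq R x) ∂gaussianReal 0 1 = ENNReal.ofReal (psiFun gaussPDF R) := by
  rw [gaussianReal_of_var_ne_zero _ one_ne_zero, gaussPDF_eq_gaussianPDFReal]
  exact lintegral_tailSq_withDensity (measurable_gaussianPDFReal 0 1) (gaussianPDFReal_nonneg 0 1)
    (integrable_sq_mul_gaussianPDFReal 0 one_ne_zero) R

lemma gaussianReal_map_neg_zero_one : (gaussianReal 0 1).map (fun x => -x) = gaussianReal 0 1 := by
  simpa using gaussianReal_map_neg (μ := 0) (v := 1)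

lemma lintegral_gaussianReal_eq_lintegral_affine (m : ℝ) (v : ℝ≥0) {F : ℝ → ℝ≥0∞}
    (hF : Measurable F) :
    ∫⁻ x, F x ∂gaussianReal m v = ∫⁻ w, F (m + √v * w) ∂gaussianReal 0 1 := by
  have hmap : (gaussianReal 0 1).map (fun w => m + √v * w) = gaussianReal m v := by
    rw [← Function.comp_def (m + ·) (√v * ·),
      ← Measure.map_map (measurable_const_add m) (measurable_const_mul _),
      gaussianReal_map_const_mul, gaussianReal_map_const_add]
    congr 1
    · simp
    · ext; simp
  rw [← hmap, lintegral_map hF (by fun_prop)]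

lemma lintegral_mul_ofReal_integral_gaussianPDFReal_le {ρ : ℝ → ℝ} (hmeas : Measurable ρ)
    (hpos : ∀ y, 0 ≤ ρ y) {F : ℝ → ℝ≥0∞} (hF : Measurable F) (c : ℝ) {v : ℝ≥0} (hv : v ≠ 0) :
    ∫⁻ x, F x * ENNReal.ofReal (∫ y, ρ y * gaussianPDFReal (c * y) v x)
      ≤ ∫⁻ y, ∫⁻ w, F (c * y + √v * w) ∂gaussianReal 0 1
          ∂volume.withDensity fun y => ENNReal.ofReal (ρ y) :=
  calc ∫⁻ x, F x * ENNReal.ofReal (∫ y, ρ y * gaussianPDFReal (c * y) v x)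
      ≤ ∫⁻ x, F x * ∫⁻ y, ENNReal.ofReal (ρ y) * gaussianPDF (c * y) v x := by
        refine lintegral_mono fun x => ?_
        gcongr
        refine (ofReal_integral_le_lintegral_ofReal fun y =>
          mul_nonneg (hpos y) (gaussianPDFReal_nonneg _ _ _)).trans_eq ?_
        exact lintegral_congr fun y => ENNReal.ofReal_mul (hpos y)
    _ = ∫⁻ x, ∫⁻ y, F x * (ENNReal.ofReal (ρ y) * gaussianPDF (c * y) v x) :=
        lintegral_congr fun x => (lintegral_const_mul _ (by fun_prop)).symm
    _ = ∫⁻ y, ∫⁻ x, F x * (ENNReal.ofReal (ρ y) * gaussianPDF (c * y) v x) :=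
        lintegral_lintegral_swap (by fun_prop)
    _ = ∫⁻ y, ENNReal.ofReal (ρ y) * ∫⁻ x, F x ∂gaussianReal (c * y) v := by
        refine lintegral_congr fun y => ?_
        rw [gaussianReal_of_var_ne_zero _ hv, lintegral_withDensity_eq_lintegral_mul _
          (measurable_gaussianPDF _ _) hF, ← lintegral_const_mul _ (by fun_prop)]
        exact lintegral_congr fun x => by rw [Pi.mul_apply]; ring
    _ = ∫⁻ y, ENNReal.ofReal (ρ y) * ∫⁻ w, F (c * y + √v * w) ∂gaussianReal 0 1 := by
        simp_rw [lintegral_gaussianReal_eq_lintegral_affine _ _ hF]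
    _ = _ := (lintegral_withDensity_eq_lintegral_mul_non_measurable _ hmeas.ennreal_ofReal
          (ae_of_all _ fun _ => ENNReal.ofReal_lt_top) _).symm

lemma lintegral_tailSq_affine_le {ν : Measure ℝ} [IsProbabilityMeasure ν]
    (hν : ν.map (fun x => -x) = ν) {c σ : ℝ} (hcσ : c ^ 2 + σ ^ 2 = 1) (R y : ℝ) :
    ∫⁻ w, ENNReal.ofReal (tailSq R (c * y + σ * w)) ∂ν
      ≤ ENNReal.ofReal (tailSq (R / 2) y) + ∫⁻ w, ENNReal.ofReal (tailSq (R / 2) w) ∂ν := by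
  have hmeas : Measurable fun w => ENNReal.ofReal (tailSq R (c * y + σ * w)) :=
    ((measurable_tailSq R).comp (by fun_prop)).ennreal_ofReal
  have hflip : ∫⁻ w, ENNReal.ofReal (tailSq R (c * y - σ * w)) ∂ν
      = ∫⁻ w, ENNReal.ofReal (tailSq R (c * y + σ * w)) ∂ν := by
    conv_rhs => rw [← hν, lintegral_map hmeas measurable_neg]
    simp_rw [mul_neg, sub_eq_add_neg]
  rw [← ENNReal.mul_le_mul_iff_right two_ne_zero ENNReal.ofNat_ne_top, two_mul]
  nth_rewrite 2 [← hflip]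
  rw [← lintegral_add_left hmeas]
  calc ∫⁻ w, ENNReal.ofReal (tailSq R (c * y + σ * w))
        + ENNReal.ofReal (tailSq R (c * y - σ * w)) ∂ν
      ≤ ∫⁻ w, 2 * (ENNReal.ofReal (tailSq (R / 2) y) + ENNReal.ofReal (tailSq (R / 2) w)) ∂ν := by
        refine lintegral_mono fun w => ?_
        rw [← ENNReal.ofReal_add (tailSq_nonneg _ _) (tailSq_nonneg _ _),
          ← ENNReal.ofReal_add (tailSq_nonneg _ _) (tailSq_nonneg _ _),
          ← ENNReal.ofReal_ofNat 2, ← ENNReal.ofReal_mul zero_le_two]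
        exact ENNReal.ofReal_le_ofReal (tailSq_add_tailSq_sub_le hcσ R y w)
    _ = 2 * (ENNReal.ofReal (tailSq (R / 2) y) + ∫⁻ w, ENNReal.ofReal (tailSq (R / 2) w) ∂ν) := by
        rw [lintegral_const_mul _ (by fun_prop), lintegral_add_left measurable_const,
          lintegral_const, measure_univ, mul_one]

lemma lintegral_lintegral_tailSq_affine_le {μ ν : Measure ℝ} [IsProbabilityMeasure μ]
    [IsProbabilityMeasure ν] (hν : ν.map (fun x => -x) = ν) {c σ : ℝ}
    (hcσ : c ^ 2 + σ ^ 2 = 1) (R : ℝ) :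
    ∫⁻ y, ∫⁻ w, ENNReal.ofReal (tailSq R (c * y + σ * w)) ∂ν ∂μ
      ≤ ∫⁻ y, ENNReal.ofReal (tailSq (R / 2) y) ∂μ
        + ∫⁻ w, ENNReal.ofReal (tailSq (R / 2) w) ∂ν :=
  calc _ ≤ ∫⁻ y, (ENNReal.ofReal (tailSq (R / 2) y)
          + ∫⁻ w, ENNReal.ofReal (tailSq (R / 2) w) ∂ν) ∂μ :=
        lintegral_mono fun y => lintegral_tailSq_affine_le hν hcσ R y
    _ = _ := by rw [lintegral_add_right _ measurable_const, lintegral_const, measure_univ, mul_one]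

lemma ouDens_eq_integral_gaussianPDFReal (ρ : ℝ → ℝ) {t : ℝ} (h : 0 ≤ 1 - exp (-2 * t)) (x : ℝ) :
    ouDens ρ t x = ∫ y, ρ y * gaussianPDFReal (exp (-t) * y) ⟨1 - exp (-2 * t), h⟩ x :=
  rfl

lemma ofReal_psiFun_ouDens_le {ρ : ℝ → ℝ} (hmeas : Measurable ρ) (hpos : ∀ y, 0 ≤ ρ y) {t : ℝ}
    (ht : 0 < t) (R : ℝ) :
    ENNReal.ofReal (psiFun (ouDens ρ t) R)
      ≤ ∫⁻ y, ∫⁻ w, ENNReal.ofReal (tailSq R (exp (-t) * y + √(1 - exp (-2 * t)) * w))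
          ∂gaussianReal 0 1 ∂volume.withDensity fun y => ENNReal.ofReal (ρ y) := by
  have hv : 0 < 1 - exp (-2 * t) := sub_pos.2 (Real.exp_lt_one_iff.2 (by linarith))
  have hv0 : (⟨1 - exp (-2 * t), hv.le⟩ : ℝ≥0) ≠ 0 := ne_of_gt (show (0 : ℝ≥0) < ⟨_, hv.le⟩ from hv)
  have hou0 : ∀ x, 0 ≤ ouDens ρ t x := fun x => by
    rw [ouDens_eq_integral_gaussianPDFReal ρ hv.le]
    exact integral_nonneg fun y => mul_nonneg (hpos y) (gaussianPDFReal_nonneg _ _ _)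
  refine (ofReal_psiFun_le hou0 R).trans ?_
  simp_rw [ouDens_eq_integral_gaussianPDFReal ρ hv.le]
  exact lintegral_mul_ofReal_integral_gaussianPDFReal_le hmeas hpos
    (measurable_tailSq R).ennreal_ofReal _ hv0

/-- `ψ_{P_t^*ρ}(R) ≤ ψ_ρ(R/2) + ψ_g(R/2)`. -/
theorem ou_psi_bound (ρ : ℝ → ℝ) (t : ℝ) (ht : 0 < t)
    (hmeas : Measurable ρ) (hpos : ∀ x, 0 ≤ ρ x) (hmass : ∫ x, ρ x = 1)
    (hmom2 : Integrable fun x => x ^ 2 * ρ x) :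
    ∀ R : ℝ, 0 < R →
      psiFun (ouDens ρ t) R ≤ psiFun ρ (R / 2) + psiFun gaussPDF (R / 2) := by
  intro R _
  have hcσ : exp (-t) ^ 2 + √(1 - exp (-2 * t)) ^ 2 = 1 := by
    rw [Real.sq_sqrt (sub_nonneg.2 (Real.exp_le_one_iff.2 (by linarith))), ← Real.exp_nat_mul]
    ring_nf
  have := isProbabilityMeasure_withDensity_ofReal hpos hmass
  have hψρ := psiFun_nonneg hpos (R / 2)
  have hψg := psiFun_nonneg gaussPDF_nonneg (R / 2)
  rw [← ENNReal.ofReal_le_ofReal_iff (add_nonneg hψρ hψg), ENNReal.ofReal_add hψρ hψg,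
    ← lintegral_tailSq_withDensity hmeas hpos hmom2, ← lintegral_tailSq_gaussianReal]
  exact (ofReal_psiFun_ouDens_le hmeas hpos ht R).trans
    (lintegral_lintegral_tailSq_affine_le gaussianReal_map_neg_zero_one hcσ R)
end
end

section
/- Let ρ be a probability density on ℝ with finite Fisher information I(ρ) < ∞ and finite second moment. Then for every R > 0, ∫_{|x| ≥ R} ρ(x)|ln ρ(x)| dx ≤ 2 I(ρ)^{1/2} ∫_{|x| > R} ρ(x) dx + 2√π (∫_{|x| > R} (1 + x²) ρ(x) dx)^{1/2}. -/
open MeasureTheory Real Set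

noncomputable section

/-! Write `u = √ρ`. Since `u²` and `(u²)' = 2uu'` are integrable, `ρ(x) = -∫_x^∞ (u²)'`, and
Cauchy–Schwarz gives the uniform bound `ρ ≤ 2‖u‖₂‖u'‖₂ = √I(ρ)`. With `ln t ≤ t - 1` and
`s ln s ≥ s - 1` for `s = √t`, this yields `ρ |ln ρ| ≤ √I(ρ) ρ + 2√ρ` pointwise. On the tail,
Cauchy–Schwarz against the weight `(1 + x²)⁻¹`, whose integral is `π`, bounds `∫ √ρ` by
`√π (∫ (1 + x²) ρ)^{1/2}`. -/

open Filter

section CauchySchwarz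

variable {α : Type*} [MeasurableSpace α] {μ : Measure α}

theorem integral_mul_le_sqrt_integral_sq_mul_sqrt_integral_sq {f g : α → ℝ}
    (hf0 : 0 ≤ᵐ[μ] f) (hg0 : 0 ≤ᵐ[μ] g) (hf : MemLp f 2 μ) (hg : MemLp g 2 μ) :
    ∫ x, f x * g x ∂μ ≤ √(∫ x, f x ^ 2 ∂μ) * √(∫ x, g x ^ 2 ∂μ) := by
  have h := integral_mul_le_Lp_mul_Lq_of_nonneg Real.HolderConjugate.two_two hf0 hg0
    (by simpa using hf) (by simpa using hg)
  rw [Real.sqrt_eq_rpow, Real.sqrt_eq_rpow]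
  simpa using h

theorem MeasureTheory.Integrable.memLp_two_sqrt {g : α → ℝ} (hg0 : 0 ≤ᵐ[μ] g)
    (hg : Integrable g μ) : MemLp (fun x => √(g x)) 2 μ := by
  refine (memLp_two_iff_integrable_sq hg.aemeasurable.sqrt.aestronglyMeasurable).2 ?_
  refine hg.congr ?_
  filter_upwards [hg0] with x hx using (Real.sq_sqrt hx).symm

end CauchySchwarz

theorem norm_le_integral_norm_deriv {E : Type*} [NormedAddCommGroup E] [NormedSpace ℝ E]
    [CompleteSpace E] {f f' : ℝ → E} (hderiv : ∀ x, HasDerivAt f (f' x) x)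
    (hf : Integrable f) (hf' : Integrable f') (x : ℝ) :
    ‖f x‖ ≤ ∫ y, ‖f' y‖ := by
  have hlim := tendsto_zero_of_hasDerivAt_of_integrableOn_Ioi (a := x) (fun y _ => hderiv y)
    hf'.integrableOn hf.integrableOn
  have hFTC :=
    integral_Ioi_of_hasDerivAt_of_tendsto' (a := x) (fun y _ => hderiv y) hf'.integrableOn hlim
  calc ‖f x‖ = ‖∫ y in Ioi x, f' y‖ := by rw [hFTC, zero_sub, norm_neg]
    _ ≤ ∫ y in Ioi x, ‖f' y‖ := norm_integral_le_integral_norm _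
    _ ≤ ∫ y, ‖f' y‖ :=
        setIntegral_le_integral hf'.norm (Eventually.of_forall fun _ => norm_nonneg _)

theorem sq_le_two_mul_sqrt_integral_sq_mul_sqrt_integral_deriv_sq {u : ℝ → ℝ}
    (hu : Differentiable ℝ u) (hu2 : Integrable fun x => u x ^ 2)
    (hu'2 : Integrable fun x => deriv u x ^ 2) (x : ℝ) :
    u x ^ 2 ≤ 2 * √(∫ y, u y ^ 2) * √(∫ y, deriv u y ^ 2) := by
  have hL2 : MemLp u 2 volume :=
    (memLp_two_iff_integrable_sq hu.continuous.aestronglyMeasurable).2 hu2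
  have hL2' : MemLp (deriv u) 2 volume :=
    (memLp_two_iff_integrable_sq (measurable_deriv u).aestronglyMeasurable).2 hu'2
  have hderiv : ∀ y, HasDerivAt (fun y => u y ^ 2) (2 * u y * deriv u y) y := fun y => by
    simpa using (hu y).hasDerivAt.fun_pow 2
  have hint : Integrable fun y => 2 * u y * deriv u y := by
    simpa [mul_assoc] using (hL2.integrable_mul hL2').const_mul 2
  have hCS := integral_mul_le_sqrt_integral_sq_mul_sqrt_integral_sq
    (Eventually.of_forall fun y => abs_nonneg (u y))
    (Eventually.of_forall fun y => abs_nonneg (deriv u y)) hL2.abs hL2'.abs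
  simp only [sq_abs] at hCS
  calc u x ^ 2 = ‖u x ^ 2‖ := (Real.norm_of_nonneg (sq_nonneg _)).symm
    _ ≤ ∫ y, ‖2 * u y * deriv u y‖ := norm_le_integral_norm_deriv hderiv hu2 hint x
    _ = 2 * ∫ y, |u y| * |deriv u y| := by
        simp only [Real.norm_eq_abs, abs_mul, abs_two, mul_assoc, integral_const_mul]
    _ ≤ 2 * √(∫ y, u y ^ 2) * √(∫ y, deriv u y ^ 2) := by
        rw [mul_assoc]; gcongr

theorem le_sqrt_fisherInfo {ρ : ℝ → ℝ} (hpos : ∀ x, 0 ≤ ρ x) (hmass : ∫ x, ρ x = 1)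
    (hdiff : Differentiable ℝ fun x => √(ρ x))
    (hI : Integrable fun x => (deriv (fun y => √(ρ y)) x) ^ 2) (x : ℝ) :
    ρ x ≤ √(fisherInfo ρ) := by
  have hsq : ∀ y, √(ρ y) ^ 2 = ρ y := fun y => Real.sq_sqrt (hpos y)
  have hρ : Integrable ρ := Integrable.of_integral_ne_zero (by simp [hmass])
  have h := sq_le_two_mul_sqrt_integral_sq_mul_sqrt_integral_deriv_sq hdiff
    (by simpa only [hsq] using hρ) hI x
  have hsqrt4 : √4 = 2 := by
    rw [show (4 : ℝ) = 2 ^ 2 by norm_num, Real.sqrt_sq zero_le_two]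
  simpa only [hsq, hmass, Real.sqrt_one, mul_one, fisherInfo, Real.sqrt_mul zero_le_four,
    hsqrt4] using h

theorem mul_abs_log_le {t M : ℝ} (ht : 0 ≤ t) (htM : t ≤ M) :
    t * |log t| ≤ M * t + 2 * √t := by
  rcases ht.eq_or_lt with rfl | ht
  · simp
  set s := √t
  have hs : 0 < s := Real.sqrt_pos.2 ht
  have hts : t = s ^ 2 := (Real.sq_sqrt ht.le).symm
  have hlog : log t = 2 * log s := by rw [Real.log_sqrt ht.le]; ring
  have hlower : s - 1 ≤ s * log s := by
    have := Real.one_sub_inv_le_log_of_pos hs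
    calc s - 1 = s * (1 - s⁻¹) := by field_simp
      _ ≤ s * log s := by gcongr
  have hupper : log t ≤ t - 1 := Real.log_le_sub_one_of_pos ht
  rw [← abs_of_pos ht, ← abs_mul, abs_of_pos ht]
  refine abs_le.2 ⟨?_, ?_⟩
  · nlinarith
  · nlinarith

theorem setOf_le_abs_ae_eq_setOf_lt_abs (R : ℝ) :
    {x : ℝ | R ≤ |x|} =ᵐ[volume] {x | R < |x|} := by
  filter_upwards [volume.ae_ne R, volume.ae_ne (-R)] with x hR hnegR
  have hx : |x| ≠ R := fun h => (eq_or_eq_neg_of_abs_eq h).elim hR hnegR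
  exact propext ⟨fun h => lt_of_le_of_ne h hx.symm, le_of_lt⟩

section WeightedTail

variable {f : ℝ → ℝ} {s : Set ℝ}

theorem sqrt_eq_sqrt_inv_one_add_sq_mul_sqrt (a x : ℝ) :
    √a = √((1 + x ^ 2)⁻¹) * √((1 + x ^ 2) * a) := by
  rw [← Real.sqrt_mul (by positivity), inv_mul_cancel_left₀ (by positivity)]

theorem memLp_two_sqrt_inv_one_add_sq :
    MemLp (fun x : ℝ => √((1 + x ^ 2)⁻¹)) 2 (volume.restrict s) :=
  integrable_inv_one_add_sq.integrableOn.memLp_two_sqrt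
    (Eventually.of_forall fun x => by positivity)

theorem MeasureTheory.IntegrableOn.integrableOn_sqrt (hf : ∀ x, 0 ≤ f x)
    (hfi : IntegrableOn (fun x => (1 + x ^ 2) * f x) s) :
    IntegrableOn (fun x => √(f x)) s := by
  refine (memLp_two_sqrt_inv_one_add_sq.integrable_mul
    (hfi.memLp_two_sqrt (Eventually.of_forall fun x => mul_nonneg (by positivity) (hf x)))).congr
    (Eventually.of_forall fun x => ?_)
  exact (sqrt_eq_sqrt_inv_one_add_sq_mul_sqrt (f x) x).symm

theorem setIntegral_sqrt_le (hf : ∀ x, 0 ≤ f x)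
    (hfi : IntegrableOn (fun x => (1 + x ^ 2) * f x) s) :
    ∫ x in s, √(f x) ≤ √π * √(∫ x in s, (1 + x ^ 2) * f x) := by
  have hCS := integral_mul_le_sqrt_integral_sq_mul_sqrt_integral_sq
    (Eventually.of_forall fun x => Real.sqrt_nonneg _)
    (Eventually.of_forall fun x => Real.sqrt_nonneg _) memLp_two_sqrt_inv_one_add_sq
    (hfi.memLp_two_sqrt (Eventually.of_forall fun x => mul_nonneg (by positivity) (hf x)))
  have hsq_inv (x : ℝ) : √((1 + x ^ 2)⁻¹) ^ 2 = (1 + x ^ 2)⁻¹ := Real.sq_sqrt (by positivity)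
  have hsq_mul (x : ℝ) : √((1 + x ^ 2) * f x) ^ 2 = (1 + x ^ 2) * f x :=
    Real.sq_sqrt (mul_nonneg (by positivity) (hf x))
  simp only [← sqrt_eq_sqrt_inv_one_add_sq_mul_sqrt, hsq_inv, hsq_mul] at hCS
  have hπ : ∫ x in s, (1 + x ^ 2)⁻¹ ≤ π := integral_univ_inv_one_add_sq ▸
    setIntegral_le_integral integrable_inv_one_add_sq (Eventually.of_forall fun x => by positivity)
  exact hCS.trans (by gcongr)

end WeightedTail

theorem tail_entropy_bound_general (ρ : ℝ → ℝ)
    (hpos : ∀ x, 0 ≤ ρ x) (hmass : ∫ x, ρ x = 1)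
    (hdiff : Differentiable ℝ fun x => Real.sqrt (ρ x))
    (hI : Integrable fun x => (deriv (fun y => Real.sqrt (ρ y)) x) ^ 2)
    (hmom2 : Integrable fun x => x ^ 2 * ρ x)
    (R : ℝ) :
    ∫ x in {x : ℝ | R ≤ |x|}, ρ x * |Real.log (ρ x)|
      ≤ 2 * Real.sqrt (fisherInfo ρ) * (∫ x in {x : ℝ | R < |x|}, ρ x)
        + 2 * Real.sqrt Real.pi *
          Real.sqrt (∫ x in {x : ℝ | R < |x|}, (1 + x ^ 2) * ρ x) := by
  set S := {x : ℝ | R < |x|}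
  have hρ : Integrable ρ := Integrable.of_integral_ne_zero (by simp [hmass])
  have hmom : IntegrableOn (fun x => (1 + x ^ 2) * ρ x) S := by
    refine ((hρ.add hmom2).congr (Eventually.of_forall fun x => ?_)).integrableOn
    simp only [Pi.add_apply]
    ring
  have hsqrt : IntegrableOn (fun x => √(ρ x)) S := hmom.integrableOn_sqrt hpos
  have hρS : 0 ≤ ∫ x in S, ρ x := integral_nonneg hpos
  rw [setIntegral_congr_set (setOf_le_abs_ae_eq_setOf_lt_abs R)]
  calc ∫ x in S, ρ x * |log (ρ x)|
      ≤ ∫ x in S, (√(fisherInfo ρ) * ρ x + 2 * √(ρ x)) :=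
        integral_mono_of_nonneg (Eventually.of_forall fun x => mul_nonneg (hpos x) (abs_nonneg _))
          ((hρ.integrableOn.const_mul _).add (hsqrt.const_mul 2))
          (Eventually.of_forall fun x =>
            mul_abs_log_le (hpos x) (le_sqrt_fisherInfo hpos hmass hdiff hI x))
    _ = √(fisherInfo ρ) * (∫ x in S, ρ x) + 2 * ∫ x in S, √(ρ x) := by
        rw [integral_add (hρ.integrableOn.const_mul _) (hsqrt.const_mul 2), integral_const_mul,
          integral_const_mul]
    _ ≤ 2 * √(fisherInfo ρ) * (∫ x in S, ρ x) + 2 * √π * √(∫ x in S, (1 + x ^ 2) * ρ x) := by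
        rw [mul_assoc 2 √π]
        gcongr ?_ + 2 * ?_
        · linarith [mul_nonneg (Real.sqrt_nonneg (fisherInfo ρ)) hρS]
        · exact setIntegral_sqrt_le hpos hmom

/-- if `I(ρ) < ∞` and `ρ` has finite second moment, then for `R > 0`,
`∫_{|x|≥R} ρ |ln ρ| ≤ 2 I(ρ)^{1/2} ∫_{|x|>R} ρ + 2√π (∫_{|x|>R} (1+x²) ρ)^{1/2}`. -/
theorem tail_entropy_bound (ρ : ℝ → ℝ)
    (hmeas : Measurable ρ) (hpos : ∀ x, 0 ≤ ρ x) (hmass : ∫ x, ρ x = 1)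
    (hdiff : Differentiable ℝ fun x => Real.sqrt (ρ x))
    (hI : Integrable fun x => (deriv (fun y => Real.sqrt (ρ y)) x) ^ 2)
    (hmom2 : Integrable fun x => x ^ 2 * ρ x)
    (R : ℝ) (hR : 0 < R) :
    ∫ x in {x : ℝ | R ≤ |x|}, ρ x * |Real.log (ρ x)|
      ≤ 2 * Real.sqrt (fisherInfo ρ) * (∫ x in {x : ℝ | R < |x|}, ρ x)
        + 2 * Real.sqrt Real.pi *
          Real.sqrt (∫ x in {x : ℝ | R < |x|}, (1 + x ^ 2) * ρ x) :=
  tail_entropy_bound_general ρ hpos hmass hdiff hI hmom2 R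
end
end
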